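/- arXiv:1711.02720 — 4 statements merged into one kernel-verified Lean document; each statement's English description precedes it below -/
import Mathlib

section
/- Let X be the dual of a Banach space Y, j : X → (-∞,∞] proper and convex, x ∈ dom(j), g ∈ ∂j(x). If j is weakly-* twice epi-differentiable at x for g (i.e., for every direction z and every sequence tₙ ↘ 0 there exists a recovery sequence zₙ →* z with (j(x + tₙ zₙ) − j(x) − tₙ⟨g, zₙ⟩)/(tₙ²/2) → Q(z)), then the second subderivative Q is a convex function on X. -/
/-! The second-order difference quotient is nonnegative because `g` is a subgradient, and it is
convex in the direction because `j` is convex and the first-order part subtracted from it is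
affine. Given recovery sequences for `z` and `zh` along the same steps, their convex combination
converges weak-* to the combined direction, so `Q` there is at most the liminf of the combined
quotients, hence at most the limit of the convex combination of the two recovering quotients,
which is `l Q(z) + (1 - l) Q(zh)`. Nonnegativity of `Q` keeps `⊥ + ⊤` out of that limit. -/

open Filter Topology

variable {Y : Type*} [NormedAddCommGroup Y] [NormedSpace ℝ Y] [CompleteSpace Y]

/-- Second-order difference quotient of `j` at `x` for `g` with step `t` and direction `w`. -/
noncomputable def secondQuot (j : StrongDual ℝ Y → EReal) (x : StrongDual ℝ Y)
    (g : Y) (t : ℝ) (w : StrongDual ℝ Y) : EReal :=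
  ((2 / t ^ 2 : ℝ) : EReal) * (j (x + t • w) - j x - ((t * w g : ℝ) : EReal))

/-- Weak-* convergence of a sequence in the dual of `Y`. -/
def WeakStarTendsto (z : ℕ → StrongDual ℝ Y) (z₀ : StrongDual ℝ Y) : Prop :=
  ∀ y : Y, Tendsto (fun n => z n y) atTop (nhds (z₀ y))

/-- The weak-* second subderivative of `j` at `x` for `g`. -/
noncomputable def Qsub (j : StrongDual ℝ Y → EReal) (x : StrongDual ℝ Y) (g : Y)
    (z : StrongDual ℝ Y) : EReal :=
  sInf { L | ∃ (t : ℕ → ℝ) (zs : ℕ → StrongDual ℝ Y),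
      (∀ n, 0 < t n) ∧ Tendsto t atTop (nhds 0) ∧ WeakStarTendsto zs z ∧
      L = Filter.liminf (fun n => secondQuot j x g (t n) (zs n)) atTop }

theorem EReal.mul_sub_sub_le_convexComb {a b c : EReal} (ha : a ≠ ⊥) (hb : b ≠ ⊥)
    {k l d p q : ℝ} (hk : 0 < k) (hl0 : 0 < l) (hl1 : l < 1)
    (h : c ≤ (l : EReal) * a + ((1 - l : ℝ) : EReal) * b) :
    (k : EReal) * (c - d - ((l * p + (1 - l) * q : ℝ) : EReal)) ≤
      (l : EReal) * ((k : EReal) * (a - d - p))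
        + ((1 - l : ℝ) : EReal) * ((k : EReal) * (b - d - q)) := by
  have hl1' : 0 < 1 - l := by linarith
  induction a using EReal.rec <;> induction b using EReal.rec <;> induction c using EReal.rec
  -- every case with an infinite value closes; the all-finite one becomes a real inequality
  all_goals simp_all [EReal.coe_mul_top_of_pos, EReal.coe_mul_bot_of_pos, ← EReal.coe_sub,
    ← EReal.coe_mul, ← EReal.coe_add]
  nlinarith [mul_le_mul_of_nonneg_left h hk.le]

theorem EReal.Tendsto.coe_mul_add_coe_mul {α : Type*} {f : Filter α} {u v : α → EReal}
    {A B : EReal} (hu : Tendsto u f (𝓝 A)) (hv : Tendsto v f (𝓝 B)) (hA : A ≠ ⊥) (hB : B ≠ ⊥)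
    {l m : ℝ} (hl : 0 ≤ l) (hm : 0 ≤ m) :
    Tendsto (fun n => (l : EReal) * u n + (m : EReal) * v n) f (𝓝 (l * A + m * B)) := by
  have coe_mul_ne_bot : ∀ {r : ℝ} {C : EReal}, 0 ≤ r → C ≠ ⊥ → (r : EReal) * C ≠ ⊥ :=
    fun {r} _ hr hC => (EReal.mul_ne_bot _ _).2
      ⟨Or.inl (EReal.coe_ne_bot r), Or.inr hC, Or.inl (EReal.coe_ne_top r),
        Or.inl (EReal.coe_nonneg.2 hr)⟩
  exact (EReal.continuousAt_add (Or.inr (coe_mul_ne_bot hm hB))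
    (Or.inl (coe_mul_ne_bot hl hA))).tendsto.comp
    ((EReal.Tendsto.const_mul hu (Or.inl (EReal.coe_ne_bot l))
        (Or.inl (EReal.coe_ne_top l))).prodMk_nhds
      (EReal.Tendsto.const_mul hv (Or.inl (EReal.coe_ne_bot m)) (Or.inl (EReal.coe_ne_top m))))

section Dual

variable {E : Type*} [NormedAddCommGroup E] [NormedSpace ℝ E]

theorem WeakStarTendsto.smul_add_smul {zs ws : ℕ → StrongDual ℝ E} {z w : StrongDual ℝ E}
    (hz : WeakStarTendsto zs z) (hw : WeakStarTendsto ws w) (a b : ℝ) :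
    WeakStarTendsto (fun n => a • zs n + b • ws n) (a • z + b • w) := fun y => by
  simpa using ((hz y).const_mul a).add ((hw y).const_mul b)

variable {j : StrongDual ℝ E → EReal} {x : StrongDual ℝ E} {g : E}

theorem secondQuot_nonneg (hbot : ∀ u, j u ≠ ⊥) (hx : j x ≠ ⊤)
    (hg : ∀ z : StrongDual ℝ E, j x + (((z - x) g : ℝ) : EReal) ≤ j z) (t : ℝ)
    (w : StrongDual ℝ E) : 0 ≤ secondQuot j x g t w := by
  have hsub : j x + ((t * w g : ℝ) : EReal) ≤ j (x + t • w) := by simpa using hg (x + t • w)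
  refine mul_nonneg (EReal.coe_nonneg.2 (by positivity)) ?_
  rw [EReal.sub_nonneg (Or.inr (EReal.coe_ne_top _)) (Or.inr (EReal.coe_ne_bot _)),
    EReal.le_sub_iff_add_le (Or.inl (hbot x)) (Or.inl hx), add_comm]
  exact hsub

theorem Qsub_nonneg (hbot : ∀ u, j u ≠ ⊥) (hx : j x ≠ ⊤)
    (hg : ∀ z : StrongDual ℝ E, j x + (((z - x) g : ℝ) : EReal) ≤ j z) (z : StrongDual ℝ E) :
    0 ≤ Qsub j x g z :=
  le_sInf <| by
    rintro _ ⟨t, zs, -, -, -, rfl⟩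
    exact le_liminf_of_le (by isBoundedDefault)
      (Eventually.of_forall fun n => secondQuot_nonneg hbot hx hg (t n) (zs n))

theorem secondQuot_convexComb_le (hbot : ∀ u, j u ≠ ⊥)
    (hconv : ∀ (a b : StrongDual ℝ E) (l : ℝ), 0 ≤ l → l ≤ 1 →
      j (l • a + (1 - l) • b) ≤ ((l : ℝ) : EReal) * j a + (((1 - l : ℝ)) : EReal) * j b)
    (hx : j x ≠ ⊤) {t : ℝ} (ht : t ≠ 0) (u v : StrongDual ℝ E) {l : ℝ} (hl0 : 0 ≤ l)
    (hl1 : l ≤ 1) :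
    secondQuot j x g t (l • u + (1 - l) • v) ≤
      (l : EReal) * secondQuot j x g t u + ((1 - l : ℝ) : EReal) * secondQuot j x g t v := by
  rcases hl0.eq_or_lt with rfl | hl0
  · simp
  rcases hl1.eq_or_lt with rfl | hl1
  · simp
  obtain ⟨d, hd⟩ : ∃ d : ℝ, j x = d := ⟨_, (EReal.coe_toReal hx (hbot x)).symm⟩
  have hpoint : x + t • (l • u + (1 - l) • v) = l • (x + t • u) + (1 - l) • (x + t • v) := by
    module
  have hslope : t * (l • u + (1 - l) • v) g = l * (t * u g) + (1 - l) * (t * v g) := by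
    simp only [add_apply, smul_apply, smul_eq_mul]
    ring
  unfold secondQuot
  rw [hd, hpoint, hslope]
  exact EReal.mul_sub_sub_le_convexComb (hbot _) (hbot _) (by positivity) hl0 hl1
    (hconv _ _ l hl0.le hl1.le)

end Dual

theorem Qsub_convex_of_weakStar_twice_epiDiff_general (j : StrongDual ℝ Y → EReal)
    (hbot : ∀ u, j u ≠ ⊥)
    (hconv : ∀ (a b : StrongDual ℝ Y) (l : ℝ), 0 ≤ l → l ≤ 1 →
      j (l • a + (1 - l) • b) ≤ ((l : ℝ) : EReal) * j a + (((1 - l : ℝ)) : EReal) * j b)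
    (x : StrongDual ℝ Y) (hx : j x ≠ ⊤) (g : Y)
    (hg : ∀ z : StrongDual ℝ Y, j x + (((z - x) g : ℝ) : EReal) ≤ j z)
    (hepi : ∀ z : StrongDual ℝ Y, ∀ t : ℕ → ℝ, (∀ n, 0 < t n) →
      Tendsto t atTop (nhds 0) →
      ∃ zs : ℕ → StrongDual ℝ Y, WeakStarTendsto zs z ∧
        Tendsto (fun n => secondQuot j x g (t n) (zs n)) atTop (nhds (Qsub j x g z))) :
    ∀ (z zh : StrongDual ℝ Y) (l : ℝ), 0 ≤ l → l ≤ 1 →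
      Qsub j x g (l • z + (1 - l) • zh) ≤
        ((l : ℝ) : EReal) * Qsub j x g z + (((1 - l : ℝ)) : EReal) * Qsub j x g zh := by
  intro z zh l hl0 hl1
  set t : ℕ → ℝ := fun n => 1 / (n + 1)
  have ht : ∀ n, 0 < t n := fun n => by positivity
  have ht0 : Tendsto t atTop (𝓝 0) := tendsto_one_div_add_atTop_nhds_zero_nat
  obtain ⟨zs, hzs, hQz⟩ := hepi z t ht ht0
  obtain ⟨zhs, hzhs, hQzh⟩ := hepi zh t ht ht0
  have hQ_ne_bot : ∀ w, Qsub j x g w ≠ ⊥ := fun w =>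
    (EReal.bot_lt_zero.trans_le (Qsub_nonneg hbot hx hg w)).ne'
  calc Qsub j x g (l • z + (1 - l) • zh)
      ≤ liminf (fun n => secondQuot j x g (t n) (l • zs n + (1 - l) • zhs n)) atTop :=
        sInf_le ⟨t, _, ht, ht0, hzs.smul_add_smul hzhs l (1 - l), rfl⟩
    _ ≤ liminf (fun n => (l : EReal) * secondQuot j x g (t n) (zs n)
          + ((1 - l : ℝ) : EReal) * secondQuot j x g (t n) (zhs n)) atTop :=
        liminf_le_liminf (Eventually.of_forall fun n =>
          secondQuot_convexComb_le hbot hconv hx (ht n).ne' (zs n) (zhs n) hl0 hl1)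
    _ = _ := (EReal.Tendsto.coe_mul_add_coe_mul hQz hQzh (hQ_ne_bot z) (hQ_ne_bot zh) hl0
          (sub_nonneg.2 hl1)).liminf_eq

/-- if `j` is proper, convex and weakly-* twice epi-differentiable at `x`
for `g ∈ ∂j(x)`, then the weak-* second subderivative is convex. -/
theorem Qsub_convex_of_weakStar_twice_epiDiff (j : StrongDual ℝ Y → EReal)
    (hbot : ∀ u, j u ≠ ⊥) (hproper : ∃ u, j u ≠ ⊤)
    (hconv : ∀ (a b : StrongDual ℝ Y) (l : ℝ), 0 ≤ l → l ≤ 1 →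
      j (l • a + (1 - l) • b) ≤ ((l : ℝ) : EReal) * j a + (((1 - l : ℝ)) : EReal) * j b)
    (x : StrongDual ℝ Y) (hx : j x ≠ ⊤) (g : Y)
    (hg : ∀ z : StrongDual ℝ Y, j x + (((z - x) g : ℝ) : EReal) ≤ j z)
    (hepi : ∀ z : StrongDual ℝ Y, ∀ t : ℕ → ℝ, (∀ n, 0 < t n) →
      Tendsto t atTop (nhds 0) →
      ∃ zs : ℕ → StrongDual ℝ Y, WeakStarTendsto zs z ∧
        Tendsto (fun n => secondQuot j x g (t n) (zs n)) atTop (nhds (Qsub j x g z))) :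
    ∀ (z zh : StrongDual ℝ Y) (l : ℝ), 0 ≤ l → l ≤ 1 →
      Qsub j x g (l • z + (1 - l) • zh) ≤
        ((l : ℝ) : EReal) * Qsub j x g z + (((1 - l : ℝ)) : EReal) * Qsub j x g zh :=
  Qsub_convex_of_weakStar_twice_epiDiff_general j hbot hconv x hx g hg hepi
end

section
/- Let X be a Hilbert space, c > 0, and for each ε := c/(2‖A_x‖) consider the map T sending u ∈ X to the unique solution y of a variational inequality ⟨f + εA_x u + (1+nε)A_x y, z − y⟩ + (1/2)Q(z) − (1/2)Q(y) ≥ 0 (∀z ∈ X), where A_x ∈ L(X,X) satisfies ⟨A_x z, z⟩ ≥ c‖z‖². Then T is a contraction: ‖T(u₁) − T(u₂)‖ ≤ (ε/((1+nε)c))‖A_x u₁ − A_x u₂‖ ≤ (1/2)‖u₁ − u₂‖. -/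
open Filter Topology
open scoped RealInnerProductSpace

/-- the fixed-point map `T` sending `u` to the unique solution of the
variational inequality
`⟨f + εA_x u + (1+nε)A_x y, z − y⟩ + ½Q(z) − ½Q(y) ≥ 0 ∀z`, with
`ε = c/(2‖A_x‖)`, is a contraction with factor `1/2`. -/
theorem VI_fixed_point_map_contraction {X : Type*} [NormedAddCommGroup X]
    [InnerProductSpace ℝ X] [CompleteSpace X] [Nontrivial X]
    (Ax : X →L[ℝ] X) (c : ℝ) (hc : 0 < c) (hcoer : ∀ z : X, c * ‖z‖ ^ 2 ≤ ⟪Ax z, z⟫)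
    (Q : X → EReal) (hQ : ∀ z, 0 ≤ Q z) (hQproper : ∃ z, Q z ≠ ⊤)
    (f : X) (n : ℕ) (T : X → X)
    (hTfin : ∀ u : X, Q (T u) ≠ ⊤)
    (hT : ∀ u : X, ∀ z : X,
      0 ≤ ((⟪f + (c / (2 * ‖Ax‖)) • Ax u + (1 + (n : ℝ) * (c / (2 * ‖Ax‖))) • Ax (T u),
            z - T u⟫ : ℝ) : EReal) +
        (((1 : ℝ) / 2 : ℝ) : EReal) * Q z - (((1 : ℝ) / 2 : ℝ) : EReal) * Q (T u)) :
    ∀ u₁ u₂ : X,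
      ‖T u₁ - T u₂‖ ≤
        (c / (2 * ‖Ax‖)) / ((1 + (n : ℝ) * (c / (2 * ‖Ax‖))) * c) * ‖Ax u₁ - Ax u₂‖ ∧
      (c / (2 * ‖Ax‖)) / ((1 + (n : ℝ) * (c / (2 * ‖Ax‖))) * c) * ‖Ax u₁ - Ax u₂‖ ≤
        (1 / 2 : ℝ) * ‖u₁ - u₂‖ := by
  intro u₁ u₂
  have hAx : (0:ℝ) < ‖Ax‖ := by
    rcases exists_ne (0 : X) with ⟨z, hz⟩
    rcases (norm_nonneg Ax).lt_or_eq with h | h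
    · exact h
    · exfalso
      have hAx0 : Ax = 0 := norm_eq_zero.mp h.symm
      have h1 := hcoer z
      rw [hAx0] at h1
      simp at h1
      have hz' : 0 < ‖z‖ := norm_pos_iff.mpr hz
      nlinarith [mul_pos hc (pow_pos hz' 2)]
  set ε : ℝ := c / (2 * ‖Ax‖) with hε_def
  have hεpos : 0 < ε := div_pos hc (by positivity)
  have hden : (0:ℝ) < 1 + (n:ℝ) * ε := by positivity
  have hεA : ε * (2 * ‖Ax‖) = c := div_mul_cancel₀ c (by positivity)
  -- real version of the VI
  have hreal : ∀ u z : X, Q z ≠ ⊤ →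
      0 ≤ ⟪f + ε • Ax u + (1 + (n:ℝ) * ε) • Ax (T u), z - T u⟫
        + (1/2) * (Q z).toReal - (1/2) * (Q (T u)).toReal := by
    intro u z hz
    have h := hT u z
    have hzb : Q z ≠ ⊥ := ((EReal.bot_lt_zero).trans_le (hQ z)).ne'
    have hub : Q (T u) ≠ ⊥ := ((EReal.bot_lt_zero).trans_le (hQ (T u))).ne'
    rw [← EReal.coe_toReal hz hzb, ← EReal.coe_toReal (hTfin u) hub] at h
    rw [← EReal.coe_mul, ← EReal.coe_mul, ← EReal.coe_add, ← EReal.coe_sub] at h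
    exact_mod_cast h
  have h1 := hreal u₁ (T u₂) (hTfin u₂)
  have h2 := hreal u₂ (T u₁) (hTfin u₁)
  simp only [inner_add_left, real_inner_smul_left, inner_sub_right, map_sub,
    inner_sub_left] at h1 h2
  have hco := hcoer (T u₁ - T u₂)
  simp only [map_sub, inner_sub_left, inner_sub_right] at hco
  have hCS : ⟪Ax u₁ - Ax u₂, T u₂ - T u₁⟫ ≤ ‖Ax u₁ - Ax u₂‖ * ‖T u₁ - T u₂‖ := by
    have := real_inner_le_norm (Ax u₁ - Ax u₂) (T u₂ - T u₁)
    rwa [norm_sub_rev (T u₂)] at this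
  simp only [inner_sub_left, inner_sub_right] at hCS
  have hnorm : ‖T u₁ - T u₂‖ ^ 2 = ‖T u₁ - T u₂‖ * ‖T u₁ - T u₂‖ := sq _
  -- key estimate: (1+nε) c ‖d‖² ≤ ε ‖Ax u₁ - Ax u₂‖ ‖d‖
  have hkey : (1 + (n:ℝ) * ε) * c * ‖T u₁ - T u₂‖ ^ 2
      ≤ ε * (‖Ax u₁ - Ax u₂‖ * ‖T u₁ - T u₂‖) := by
    nlinarith [h1, h2, hco, hCS, hεpos, hden]
  constructor
  · rcases (norm_nonneg (T u₁ - T u₂)).lt_or_eq with hd | hd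
    · rw [div_mul_eq_mul_div, le_div_iff₀ (by positivity)]
      nlinarith [hkey, hd]
    · rw [← hd]
      positivity
  · rw [div_mul_eq_mul_div, div_le_iff₀ (by positivity)]
    have hop : ‖Ax u₁ - Ax u₂‖ ≤ ‖Ax‖ * ‖u₁ - u₂‖ := by
      rw [← map_sub]; exact Ax.le_opNorm _
    nlinarith [hop, hεA, norm_nonneg (u₁ - u₂), hεpos, hden, hc,
      mul_le_mul_of_nonneg_left hop hεpos.le,
      mul_nonneg (mul_nonneg (Nat.cast_nonneg n : (0:ℝ) ≤ n) hεpos.le)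
        (mul_nonneg hc.le (norm_nonneg (u₁ - u₂)))]
end

section
/- Induction step in the recovery-sequence argument: Let q ≥ 0 and Θ : (0,∞) → [−∞,∞] satisfy Θ(s) ≥ q for all s > 0, Θ(s₁) ≤ 2q for all s₁ > 0, and the recursion 2(1 − s₂/s₁)q + (s₂²/s₁²)Θ(s₂) − Θ(s₁) ≥ 0 for all s₁, s₂ > 0. Then Θ(s) ≤ ((m+1)/m) q for all s > 0 and all m ∈ ℕ, and consequently Θ(s) = q for all s > 0. -/
/-!
Put `θ = Θ.toReal`, which is legitimate because `q ≤ Θ ≤ 2q` keeps `Θ` finite. The recursion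
with `s₂ = (m/(m+1)) s₁` turns the bound `θ ≤ ((m+1)/m) q` at scale `s₂` into the bound
`θ ≤ ((m+2)/(m+1)) q` at scale `s₁`, since `2 q/(m+1) + (m/(m+1))² ((m+1)/m) q = ((m+2)/(m+1)) q`.
Starting from `θ ≤ 2q`, induction gives all these bounds, and `(m+1)/m → 1` gives `θ ≤ q`.
-/

open Filter Topology

theorem EReal.coe_toReal_of_coe_le_of_le_coe {a b : ℝ} {x : EReal} (ha : (a : EReal) ≤ x)
    (hb : x ≤ b) : (x.toReal : EReal) = x :=
  EReal.coe_toReal (ne_top_of_le_ne_top (EReal.coe_ne_top b) hb)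
    (ne_bot_of_le_ne_bot (EReal.coe_ne_bot a) ha)

theorem le_of_forall_le_add_one_div_mul {x q : ℝ}
    (h : ∀ m : ℕ, 1 ≤ m → x ≤ ((m : ℝ) + 1) / m * q) : x ≤ q := by
  have hlim : Tendsto (fun m : ℕ ↦ ((m : ℝ) + 1) / m * q) atTop (𝓝 q) := by
    have := (tendsto_const_div_atTop_nhds_zero_nat q).const_add q
    rw [add_zero] at this
    refine this.congr' ((eventually_ne_atTop 0).mono fun m hm ↦ ?_)
    field_simp
  exact ge_of_tendsto hlim (eventually_atTop.2 ⟨1, h⟩)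

theorem le_add_one_div_mul_of_recursion {q : ℝ} {θ : ℝ → ℝ}
    (hup : ∀ s, 0 < s → θ s ≤ 2 * q)
    (hrec : ∀ s₁ s₂, 0 < s₁ → 0 < s₂ → θ s₁ ≤ 2 * (1 - s₂ / s₁) * q + s₂ ^ 2 / s₁ ^ 2 * θ s₂)
    {m : ℕ} (hm : 1 ≤ m) {s : ℝ} (hs : 0 < s) : θ s ≤ ((m : ℝ) + 1) / m * q := by
  induction m, hm using Nat.le_induction generalizing s with
  | base => norm_num; exact hup s hs
  | succ n hn ih =>
    have hn' : (0 : ℝ) < n := by exact_mod_cast hn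
    set r : ℝ := n / (n + 1)
    have hr : r * s / s = r := by field_simp
    calc θ s ≤ 2 * (1 - r * s / s) * q + (r * s) ^ 2 / s ^ 2 * θ (r * s) :=
          hrec s (r * s) hs (by positivity)
      _ = 2 * (1 - r) * q + r ^ 2 * θ (r * s) := by rw [← div_pow, hr]
      _ ≤ 2 * (1 - r) * q + r ^ 2 * (((n : ℝ) + 1) / n * q) := by
          gcongr; exact ih (by positivity)
      _ = ((↑(n + 1) : ℝ) + 1) / ↑(n + 1) * q := by
          simp only [r]; push_cast; field_simp; ring

theorem recovery_sequence_induction_general (q : ℝ) (Θ : ℝ → EReal)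
    (hlow : ∀ s : ℝ, 0 < s → (q : EReal) ≤ Θ s)
    (hup : ∀ s : ℝ, 0 < s → Θ s ≤ ((2 * q : ℝ) : EReal))
    (hrec : ∀ s₁ s₂ : ℝ, 0 < s₁ → 0 < s₂ →
      0 ≤ ((2 * (1 - s₂ / s₁) * q : ℝ) : EReal) +
        ((s₂ ^ 2 / s₁ ^ 2 : ℝ) : EReal) * Θ s₂ - Θ s₁) :
    (∀ s : ℝ, 0 < s → ∀ m : ℕ, 1 ≤ m →
      Θ s ≤ ((((m : ℝ) + 1) / (m : ℝ) * q : ℝ) : EReal)) ∧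
    ∀ s : ℝ, 0 < s → Θ s = (q : EReal) := by
  set θ : ℝ → ℝ := fun s ↦ (Θ s).toReal
  have hfin (s : ℝ) (hs : 0 < s) : (θ s : EReal) = Θ s :=
    EReal.coe_toReal_of_coe_le_of_le_coe (hlow s hs) (hup s hs)
  have hupθ (s : ℝ) (hs : 0 < s) : θ s ≤ 2 * q := by
    have := hup s hs
    rwa [← hfin s hs, EReal.coe_le_coe_iff] at this
  have hrecθ (s₁ s₂ : ℝ) (h₁ : 0 < s₁) (h₂ : 0 < s₂) :
      θ s₁ ≤ 2 * (1 - s₂ / s₁) * q + s₂ ^ 2 / s₁ ^ 2 * θ s₂ := by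
    have := hrec s₁ s₂ h₁ h₂
    rw [← hfin s₁ h₁, ← hfin s₂ h₂] at this
    have : (0 : ℝ) ≤ 2 * (1 - s₂ / s₁) * q + s₂ ^ 2 / s₁ ^ 2 * θ s₂ - θ s₁ := by
      exact_mod_cast this
    linarith
  have hbound (s : ℝ) (hs : 0 < s) (m : ℕ) (hm : 1 ≤ m) : θ s ≤ ((m : ℝ) + 1) / m * q :=
    le_add_one_div_mul_of_recursion hupθ hrecθ hm hs
  refine ⟨fun s hs m hm ↦ ?_, fun s hs ↦ ?_⟩
  · rw [← hfin s hs, EReal.coe_le_coe_iff]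
    exact hbound s hs m hm
  · have := hlow s hs
    rw [← hfin s hs, EReal.coe_le_coe_iff] at this
    rw [← hfin s hs, EReal.coe_eq_coe_iff]
    exact le_antisymm (le_of_forall_le_add_one_div_mul (hbound s hs)) this

/-- the induction step in the recovery-sequence argument.  If
`Θ : (0,∞) → [−∞,∞]` satisfies `Θ ≥ q`, `Θ ≤ 2q` and the recursion
`2(1 − s₂/s₁)q + (s₂²/s₁²)Θ(s₂) − Θ(s₁) ≥ 0`, then `Θ(s) ≤ ((m+1)/m)q` for all `m ∈ ℕ`,
and consequently `Θ(s) = q` for all `s > 0`. -/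
theorem recovery_sequence_induction (q : ℝ) (hq : 0 ≤ q) (Θ : ℝ → EReal)
    (hlow : ∀ s : ℝ, 0 < s → (q : EReal) ≤ Θ s)
    (hup : ∀ s : ℝ, 0 < s → Θ s ≤ ((2 * q : ℝ) : EReal))
    (hrec : ∀ s₁ s₂ : ℝ, 0 < s₁ → 0 < s₂ →
      0 ≤ ((2 * (1 - s₂ / s₁) * q : ℝ) : EReal) +
        ((s₂ ^ 2 / s₁ ^ 2 : ℝ) : EReal) * Θ s₂ - Θ s₁) :
    (∀ s : ℝ, 0 < s → ∀ m : ℕ, 1 ≤ m →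
      Θ s ≤ ((((m : ℝ) + 1) / (m : ℝ) * q : ℝ) : EReal)) ∧
    ∀ s : ℝ, 0 < s → Θ s = (q : EReal) :=
  recovery_sequence_induction_general q Θ hlow hup hrec
end

section
/- Let X be the dual of a separable Banach space Y, j : X → (-∞,∞] proper, x ∈ dom(j), g ∈ ∂j(x). If j is strictly twice epi-differentiable at x for g (recovery sequences zₙ →* z with ‖zₙ‖ → ‖z‖ exist for all z and all tₙ ↘ 0), then the second subderivative Q_j^{x,g} is sequentially weak-* lower semicontinuous: z_k →* z implies liminf_k Q_j^{x,g}(z_k) ≥ Q_j^{x,g}(z). -/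
open Filter Topology

variable {Y : Type*} [NormedAddCommGroup Y] [NormedSpace ℝ Y] [CompleteSpace Y]

/-!
Given `z_k →* z`, take a recovery sequence `(z_{k,n})_n` for each `z_k` along the common steps
`t_n = 1/(n+1)`. Norm convergence `‖z_{k,n}‖ → ‖z_k‖`, together with Banach–Steinhaus for
`(z_k)`, bounds their tails uniformly, and on bounded sets weak-* convergence only has to be
tested on a countable dense subset of `Y`. Hence a diagonal choice `n = N k` can be made
simultaneously (i) weak-* convergent to `z` and (ii) with second-order quotients eventually below
every rational bound of `Q(z_k)`. As `(t_{N k}, z_{k,N k})` is admissible in the definition of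
`Q(z)`, `Q(z) ≤ liminf_k Q(z_k)`.
-/

section Dual

variable {E : Type*} [NormedAddCommGroup E] [NormedSpace ℝ E]

theorem WeakStarTendsto.exists_norm_le [CompleteSpace E] {w : ℕ → StrongDual ℝ E}
    {z : StrongDual ℝ E} (hw : WeakStarTendsto w z) : ∃ C, ∀ k, ‖w k‖ ≤ C := by
  refine banach_steinhaus fun y => ?_
  obtain ⟨C, hC⟩ := (hw y).norm.bddAbove_range
  exact ⟨C, fun k => hC ⟨k, rfl⟩⟩

theorem WeakStarTendsto.of_denseRange {w : ℕ → StrongDual ℝ E} {z : StrongDual ℝ E} {C : ℝ}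
    (hC : ∀ k, ‖w k‖ ≤ C) {e : ℕ → E} (he : DenseRange e)
    (hwe : ∀ i, Tendsto (fun k => w k (e i)) atTop (𝓝 (z (e i)))) : WeakStarTendsto w z := by
  -- A bounded sequence is equicontinuous, so its set of points of convergence is closed.
  have hequi : Equicontinuous ((↑) ∘ w : ℕ → E → ℝ) :=
    ((NormedSpace.equicontinuous_TFAE w).out 1 5).2 (⟨C, hC⟩ : ∃ C, ∀ k, ‖w k‖ ≤ C)
  have hclosed := hequi.isClosed_setOfPred_tendsto (l := atTop) z.continuous
  intro y
  have hsub : closure (Set.range e) ⊆ {u | Tendsto (fun k => w k u) atTop (𝓝 (z u))} :=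
    hclosed.closure_subset_iff.2 (Set.range_subset_iff.2 hwe)
  exact hsub (he.closure_range ▸ Set.mem_univ y)

theorem WeakStarTendsto.of_dist_denseRange_lt {w v : ℕ → StrongDual ℝ E} {z : StrongDual ℝ E}
    {C : ℝ} (hC : ∀ k, ‖w k‖ ≤ C) (hv : WeakStarTendsto v z) {e : ℕ → E} (he : DenseRange e)
    {ε : ℕ → ℝ} (hε : Tendsto ε atTop (𝓝 0))
    (hwv : ∀ k, ∀ i ≤ k, dist (w k (e i)) (v k (e i)) < ε k) :
    WeakStarTendsto w z := by
  refine .of_denseRange hC he fun i => (hv (e i)).congr_dist ?_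
  refine squeeze_zero' (.of_forall fun k => dist_nonneg) ?_ hε
  filter_upwards [eventually_ge_atTop i] with k hik
  rw [dist_comm]
  exact (hwv k i hik).le

theorem Qsub_le_liminf_secondQuot (j : StrongDual ℝ E → EReal) (x : StrongDual ℝ E) (g : E)
    {t : ℕ → ℝ} {zs : ℕ → StrongDual ℝ E} {z : StrongDual ℝ E} (ht : ∀ n, 0 < t n)
    (ht0 : Tendsto t atTop (𝓝 0)) (hz : WeakStarTendsto zs z) :
    Qsub j x g z ≤ liminf (fun n => secondQuot j x g (t n) (zs n)) atTop :=
  sInf_le ⟨t, zs, ht, ht0, hz, rfl⟩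

end Dual

theorem EReal.exists_diag_liminf_le {f : ℕ → ℕ → EReal} {L : ℕ → EReal}
    (hf : ∀ k, limsup (f k) atTop ≤ L k) {P : ℕ → ℕ → Prop} (hP : ∀ k, ∀ᶠ n in atTop, P k n) :
    ∃ N : ℕ → ℕ, Tendsto N atTop atTop ∧ (∀ k, P k (N k)) ∧
      liminf (fun k => f k (N k)) atTop ≤ liminf L atTop := by
  set q : ℕ → EReal := fun i => (((Denumerable.eqv ℚ).symm i : ℝ) : EReal) with hq
  -- At stage `k` the first `k` rational upper bounds of `L k` are transferred to `f k (N k)`.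
  have hN : ∀ k, ∃ n, k ≤ n ∧ P k n ∧ ∀ i ≤ k, L k < q i → f k n < q i := by
    intro k
    have hbounds : ∀ᶠ n in atTop, ∀ i ∈ Set.Iic k, L k < q i → f k n < q i :=
      (Set.finite_Iic k).eventually_all.2 fun i _ => by
        by_cases hi : L k < q i
        · exact (eventually_lt_of_limsup_lt ((hf k).trans_lt hi)).mono fun _ h _ => h
        · exact .of_forall fun _ h => absurd h hi
    exact ((eventually_ge_atTop k).and ((hP k).and hbounds)).exists.imp
      fun _ ⟨h₁, h₂, h₃⟩ => ⟨h₁, h₂, h₃⟩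
  choose N hNk hP hNq using hN
  refine ⟨N, tendsto_atTop_mono hNk tendsto_id, hP, le_of_forall_gt_imp_ge_of_dense fun b hb => ?_⟩
  obtain ⟨r, hLr, hrb⟩ := EReal.exists_rat_btwn_of_lt hb
  have hqr : q (Denumerable.eqv ℚ r) = ((r : ℝ) : EReal) := by
    simp only [hq, Equiv.symm_apply_apply]
  have hfreq : ∃ᶠ k in atTop, f k (N k) ≤ q (Denumerable.eqv ℚ r) := by
    refine ((frequently_lt_of_liminf_lt (by isBoundedDefault) (hqr ▸ hLr)).and_eventually
      (eventually_ge_atTop _)).mono fun k ⟨hLk, hk⟩ => (hNq k _ hk hLk).le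
  exact (liminf_le_of_frequently_le' hfreq).trans (hqr ▸ hrb.le)

theorem Qsub_weakStar_seq_lsc_general [TopologicalSpace.SeparableSpace Y]
    (j : StrongDual ℝ Y → EReal)
    (x : StrongDual ℝ Y) (g : Y)
    (hepi : ∀ z : StrongDual ℝ Y, ∀ t : ℕ → ℝ, (∀ n, 0 < t n) →
      Tendsto t atTop (nhds 0) →
      ∃ zs : ℕ → StrongDual ℝ Y, WeakStarTendsto zs z ∧
        Tendsto (fun n => ‖zs n‖) atTop (nhds ‖z‖) ∧
        Tendsto (fun n => secondQuot j x g (t n) (zs n)) atTop (nhds (Qsub j x g z))) :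
    ∀ (z : StrongDual ℝ Y) (zk : ℕ → StrongDual ℝ Y),
      WeakStarTendsto zk z →
      Qsub j x g z ≤ Filter.liminf (fun k => Qsub j x g (zk k)) atTop := by
  intro z zk hzk
  obtain ⟨C, hC⟩ := hzk.exists_norm_le
  obtain ⟨e, he⟩ := TopologicalSpace.exists_dense_seq Y
  set t : ℕ → ℝ := fun n => 1 / (n + 1)
  have ht : ∀ n, 0 < t n := fun n => by positivity
  have ht0 : Tendsto t atTop (𝓝 0) := tendsto_one_div_add_atTop_nhds_zero_nat
  choose zs hzs hnorm hquot using fun k => hepi (zk k) t ht ht0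
  -- The norm convergence of the recovery sequences keeps the diagonal sequence bounded.
  have hP : ∀ k, ∀ᶠ n in atTop,
      ‖zs k n‖ ≤ C + 1 ∧ ∀ i ≤ k, dist (zs k n (e i)) (zk k (e i)) < t k := fun k =>
    ((hnorm k).eventually_le_const ((hC k).trans_lt (lt_add_one C))).and <|
      (Set.finite_Iic k).eventually_all.2 fun i _ =>
        (hzs k (e i)).eventually (Metric.ball_mem_nhds _ (ht k))
  obtain ⟨N, hN, hNP, hlim⟩ :=
    EReal.exists_diag_liminf_le (fun k => (hquot k).limsup_eq.le) hP
  have hdiag : WeakStarTendsto (fun k => zs k (N k)) z :=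
    .of_dist_denseRange_lt (fun k => (hNP k).1) hzk he ht0 fun k => (hNP k).2
  exact (Qsub_le_liminf_secondQuot j x g (fun k => ht (N k)) (ht0.comp hN) hdiag).trans hlim

/-- if `Y` is separable and `j` is strictly twice epi-differentiable at `x`
for `g ∈ ∂j(x)`, then the second subderivative is sequentially weak-* lower semicontinuous. -/
theorem Qsub_weakStar_seq_lsc [TopologicalSpace.SeparableSpace Y]
    (j : StrongDual ℝ Y → EReal)
    (hbot : ∀ u, j u ≠ ⊥) (hproper : ∃ u, j u ≠ ⊤)
    (x : StrongDual ℝ Y) (hx : j x ≠ ⊤) (g : Y)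
    (hg : ∀ z : StrongDual ℝ Y, j x + (((z - x) g : ℝ) : EReal) ≤ j z)
    (hepi : ∀ z : StrongDual ℝ Y, ∀ t : ℕ → ℝ, (∀ n, 0 < t n) →
      Tendsto t atTop (nhds 0) →
      ∃ zs : ℕ → StrongDual ℝ Y, WeakStarTendsto zs z ∧
        Tendsto (fun n => ‖zs n‖) atTop (nhds ‖z‖) ∧
        Tendsto (fun n => secondQuot j x g (t n) (zs n)) atTop (nhds (Qsub j x g z))) :
    ∀ (z : StrongDual ℝ Y) (zk : ℕ → StrongDual ℝ Y),
      WeakStarTendsto zk z →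
      Qsub j x g z ≤ Filter.liminf (fun k => Qsub j x g (zk k)) atTop :=
  Qsub_weakStar_seq_lsc_general j x g hepi
end
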